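/- Let α = 1, k = 1, β and a₀ real with β+1 > 0 and a₀ ≠ 0, ψ_n = a₀ + (n+1)(n+β+1)/(β+1), λ_n = n(n+β+2), and let f₂(t) = t² + ½(3 + 4a₀ + 4β + 4a₀β) t. Then the difference f₂(λ_{n-1/2}) - f₂(λ_{n-3/2}) is divisible by ψ_{n-1} in ℝ[n]; i.e., the quotient (f₂(λ_{n-1/2}) - f₂(λ_{n-3/2}))/ψ_{n-1} is a polynomial in n. -/
import Mathlib

open Polynomial

/-- `ψ_n = a₀ + (n+1)(n+β+1)/(β+1)` as a polynomial in `n` (here α = 1, k = 1). -/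
noncomputable def psiPoly (β a₀ : ℝ) : Polynomial ℝ :=
  Polynomial.C a₀ +
    Polynomial.C (β + 1)⁻¹ * ((Polynomial.X + 1) * (Polynomial.X + Polynomial.C (β + 1)))

/-- `λ = X(X+β+2)` as a polynomial (α = 1, so α+β+1 = β+2). -/
noncomputable def lamPoly (β : ℝ) : Polynomial ℝ :=
  Polynomial.X * (Polynomial.X + Polynomial.C (β + 2))

/-- `f₂(t) = t² + ½(3 + 4a₀ + 4β + 4a₀β) t`. -/
noncomputable def fTwo (β a₀ : ℝ) : Polynomial ℝ :=
  Polynomial.X ^ 2 +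
    Polynomial.C ((3 + 4 * a₀ + 4 * β + 4 * a₀ * β) / 2) * Polynomial.X

theorem fTwo_membership_divisibility (β a₀ : ℝ) (hβ : 0 < β + 1) (ha : a₀ ≠ 0) :
    (psiPoly β a₀).comp (Polynomial.X - 1) ∣
      ((fTwo β a₀).comp ((lamPoly β).comp (Polynomial.X - Polynomial.C (1 / 2)))
        - (fTwo β a₀).comp ((lamPoly β).comp (Polynomial.X - Polynomial.C (3 / 2)))) := by
  have h1 : (β + 1) ≠ 0 := ne_of_gt hβ
  refine ⟨Polynomial.C (β + 1) * (Polynomial.C 4 * Polynomial.X + Polynomial.C (2 * β)), ?_⟩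
  apply Polynomial.funext
  intro x
  simp only [psiPoly, lamPoly, fTwo, eval_comp, eval_add, eval_mul, eval_sub, eval_pow,
    eval_C, eval_X, eval_one]
  field_simp
  ring
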